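/- Assume NCF (equivalently, assume every ultrafilter U on ω satisfies u < b(U), which implies d is regular and b(U) = d for every ultrafilter U). Let U be a non-principal ultrafilter on ω. Then every d-unbounded set X ⊆ [ω]^ω is a U-scale. -/
import Mathlib


open Set Filter

/-- The increasing enumeration of a set of naturals. -/
noncomputable def enum (s : Set ℕ) : ℕ → ℕ := Nat.nth (· ∈ s)

/-- `a ≤_U b`: the set of `n` with `a(n) ≤ b(n)` belongs to the ultrafilter `U`. -/
def leU (U : Ultrafilter ℕ) (a b : Set ℕ) : Prop := {n : ℕ | enum a n ≤ enum b n} ∈ U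

/-- `𝔟(U)`: least cardinality of a `≤_U`-unbounded family in `[ω]^ω`. -/
noncomputable def bU (U : Ultrafilter ℕ) : Cardinal :=
  sInf { c : Cardinal | ∃ A : Set (Set ℕ), (∀ a ∈ A, a.Infinite) ∧ Cardinal.mk A = c ∧
    ¬ ∃ b : Set ℕ, b.Infinite ∧ ∀ a ∈ A, leU U a b }

/-- The dominating number `𝔡`. -/
noncomputable def fd : Cardinal :=
  sInf { c : Cardinal | ∃ D : Set (ℕ → ℕ), Cardinal.mk D = c ∧
    ∀ f : ℕ → ℕ, ∃ g ∈ D, ∀ᶠ n in atTop, f n ≤ g n }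

/-- `X ⊆ [ω]^ω` is `𝔡`-unbounded. -/
def DUnbounded (X : Set (Set ℕ)) : Prop :=
  fd ≤ Cardinal.mk X ∧ ∀ c : Set ℕ, c.Infinite →
    Cardinal.mk {x : Set ℕ | x ∈ X ∧ ∀ n, enum x n ≤ enum c n} < fd

/-- The least cardinality of a base for the ultrafilter `V`. -/
noncomputable def ultraBaseCard (V : Ultrafilter ℕ) : Cardinal :=
  sInf { c : Cardinal | ∃ B : Set (Set ℕ), Cardinal.mk B = c ∧
    (∀ b ∈ B, b ∈ V) ∧ ∀ u ∈ V, ∃ b ∈ B, b ⊆ u }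

/-- The ultrafilter number `𝔲`: the least cardinality of a base of a non-principal
ultrafilter on `ω`. -/
noncomputable def fu : Cardinal :=
  sInf { c : Cardinal | ∃ V : Ultrafilter ℕ,
    (↑V : Filter ℕ) ≤ Filter.cofinite ∧ ultraBaseCard V = c }

/-- `X` is a `U`-scale. -/
def IsUScale (U : Ultrafilter ℕ) (X : Set (Set ℕ)) : Prop :=
  (∀ x ∈ X, x.Infinite) ∧ bU U ≤ Cardinal.mk X ∧
  ∀ g : Set ℕ, g.Infinite → ∃ c : Set ℕ, c.Infinite ∧ ∃ S ⊆ X, Cardinal.mk S < bU U ∧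
    leU U g c ∧ ∀ x ∈ X \ S, leU U c x



lemma setOf_mem_eq (x : Set ℕ) : {n : ℕ | n ∈ x} = x := rfl

lemma enum_mem {x : Set ℕ} (hx : x.Infinite) (n : ℕ) : enum x n ∈ x :=
  Nat.nth_mem_of_infinite hx n

lemma enum_strictMono {x : Set ℕ} (hx : x.Infinite) : StrictMono (enum x) :=
  Nat.nth_strictMono hx

lemma enum_mono {x : Set ℕ} (hx : x.Infinite) : Monotone (enum x) :=
  (enum_strictMono hx).monotone

lemma le_enum {x : Set ℕ} (hx : x.Infinite) (n : ℕ) : n ≤ enum x n :=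
  (enum_strictMono hx).le_apply

lemma enum_range (f : ℕ → ℕ) (hf : StrictMono f) : enum (Set.range f) = f := by
  classical
  funext n
  have hmem : f n ∈ Set.range f := ⟨n, rfl⟩
  have hcount : Nat.count (· ∈ Set.range f) (f n) = n := by
    rw [Nat.count_eq_card_filter_range]
    have : (Finset.range (f n)).filter (· ∈ Set.range f) = (Finset.range n).image f := by
      ext m
      simp only [Finset.mem_filter, Finset.mem_range, Finset.mem_image, Set.mem_range]
      constructor
      · rintro ⟨hmlt, k, rfl⟩
        exact ⟨k, hf.lt_iff_lt.mp hmlt, rfl⟩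
      · rintro ⟨k, hk, rfl⟩
        exact ⟨hf hk, k, rfl⟩
    rw [this, Finset.card_image_of_injective _ hf.injective, Finset.card_range]
  have := Nat.nth_count (p := (· ∈ Set.range f)) hmem
  rw [hcount] at this
  exact this

/-- strictly increasing envelope of `h` -/
def envf (h : ℕ → ℕ) : ℕ → ℕ := fun n => n + (Finset.range (n + 1)).sup h

lemma envf_strictMono (h : ℕ → ℕ) : StrictMono (envf h) := by
  apply strictMono_nat_of_lt_succ
  intro n
  have : (Finset.range (n + 1)).sup h ≤ (Finset.range (n + 1 + 1)).sup h :=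
    Finset.sup_mono (Finset.range_subset_range.mpr (by omega))
  simp only [envf]; omega

lemma le_envf (h : ℕ → ℕ) (n : ℕ) : h n ≤ envf h n := by
  have : h n ≤ (Finset.range (n + 1)).sup h :=
    Finset.le_sup (Finset.self_mem_range_succ n)
  simp only [envf]; omega

def env (h : ℕ → ℕ) : Set ℕ := Set.range (envf h)

lemma env_infinite (h : ℕ → ℕ) : (env h).Infinite :=
  Set.infinite_range_of_injective (envf_strictMono h).injective

lemma mem_U_infinite {U : Ultrafilter ℕ} (hU : (↑U : Filter ℕ) ≤ Filter.cofinite)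
    {M : Set ℕ} (hM : M ∈ U) : M.Infinite := by
  intro hfin
  have h2 : Mᶜ ∈ U := hU (by rw [Filter.mem_cofinite, compl_compl]; exact hfin)
  have h3 : M ∩ Mᶜ ∈ U := Filter.inter_mem hM h2
  rw [Set.inter_compl_self] at h3
  exact (Filter.empty_notMem (U : Filter ℕ)) h3

lemma leU_refl (U : Ultrafilter ℕ) (a : Set ℕ) : leU U a a := by
  have h : {n : ℕ | enum a n ≤ enum a n} = Set.univ := by ext n; simp
  rw [leU, h]
  exact (Filter.univ_mem : _ ∈ (U : Filter ℕ))

lemma leU_trans {U : Ultrafilter ℕ} {a b c : Set ℕ} (h1 : leU U a b) (h2 : leU U b c) :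
    leU U a c := by
  have h3 : {n : ℕ | enum a n ≤ enum b n} ∩ {n : ℕ | enum b n ≤ enum c n} ∈ U :=
    Filter.inter_mem h1 h2
  refine Filter.mem_of_superset h3 ?_
  rintro n ⟨hn1, hn2⟩
  exact le_trans (show enum a n ≤ enum b n from hn1) (show enum b n ≤ enum c n from hn2)

-- bU facts, to be appended after defs
lemma enum_env_ge (h : ℕ → ℕ) (n : ℕ) : h n ≤ enum (env h) n := by
  rw [env, enum_range _ (envf_strictMono h)]
  exact le_envf h n

lemma bU_set_nonempty (U : Ultrafilter ℕ) (hU : (↑U : Filter ℕ) ≤ Filter.cofinite) :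
    { c : Cardinal | ∃ A : Set (Set ℕ), (∀ a ∈ A, a.Infinite) ∧ Cardinal.mk A = c ∧
      ¬ ∃ b : Set ℕ, b.Infinite ∧ ∀ a ∈ A, leU U a b }.Nonempty := by
  refine ⟨_, {a : Set ℕ | a.Infinite}, fun a ha => ha, rfl, ?_⟩
  rintro ⟨b, hb, hbd⟩
  set a := env (fun n => enum b n + 1) with ha
  have hainf : a.Infinite := env_infinite _
  have h1 : leU U a b := hbd a hainf
  have h2 : {n : ℕ | enum a n ≤ enum b n} = ∅ := by
    ext n
    simp only [Set.mem_setOf_eq, Set.mem_empty_iff_false, iff_false, not_le]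
    have h3 := enum_env_ge (fun n => enum b n + 1) n
    rw [← ha] at h3
    omega
  rw [leU, h2] at h1
  exact (Filter.empty_notMem (U : Filter ℕ)) h1

lemma bU_mem (U : Ultrafilter ℕ) (hU : (↑U : Filter ℕ) ≤ Filter.cofinite) :
    ∃ A : Set (Set ℕ), (∀ a ∈ A, a.Infinite) ∧ Cardinal.mk A = bU U ∧
      ¬ ∃ b : Set ℕ, b.Infinite ∧ ∀ a ∈ A, leU U a b :=
  csInf_mem (bU_set_nonempty U hU)

/-- any family of infinite sets of size < bU U is ≤_U-bounded -/
lemma bounded_of_lt_bU {U : Ultrafilter ℕ} {A : Set (Set ℕ)} (hAinf : ∀ a ∈ A, a.Infinite)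
    (hA : Cardinal.mk A < bU U) : ∃ b : Set ℕ, b.Infinite ∧ ∀ a ∈ A, leU U a b := by
  by_contra hno
  have hmem : Cardinal.mk A ∈ { c : Cardinal | ∃ A : Set (Set ℕ), (∀ a ∈ A, a.Infinite) ∧
      Cardinal.mk A = c ∧ ¬ ∃ b : Set ℕ, b.Infinite ∧ ∀ a ∈ A, leU U a b } :=
    ⟨A, hAinf, rfl, hno⟩
  exact absurd (csInf_le' hmem) (not_le.mpr hA)

lemma aleph0_le_bU (U : Ultrafilter ℕ) (hU : (↑U : Filter ℕ) ≤ Filter.cofinite) :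
    Cardinal.aleph0 ≤ bU U := by
  by_contra hlt
  push_neg at hlt
  obtain ⟨A, hAinf, hmk, hno⟩ := bU_mem U hU
  rw [← hmk] at hlt
  have hfin : A.Finite := by
    rw [← Set.not_infinite]
    intro hinf
    exact absurd hlt (not_lt.mpr (Cardinal.infinite_iff.mp hinf.to_subtype))
  apply hno
  classical
  refine ⟨env (fun n => hfin.toFinset.sup (fun a => enum a n)), env_infinite _, fun a ha => ?_⟩
  have : ∀ n, enum a n ≤ enum (env (fun n => hfin.toFinset.sup (fun a => enum a n))) n := by
    intro n
    refine le_trans ?_ (enum_env_ge _ n)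
    exact Finset.le_sup (f := fun a => enum a n) (hfin.mem_toFinset.mpr ha)
  have h : {n : ℕ | enum a n ≤ enum _ n} = Set.univ := Set.eq_univ_of_forall this
  refine Filter.mem_of_superset (Filter.univ_mem : _ ∈ (U : Filter ℕ)) ?_
  intro n _
  exact this n

lemma fd_set_nonempty :
    { c : Cardinal | ∃ D : Set (ℕ → ℕ), Cardinal.mk D = c ∧
      ∀ f : ℕ → ℕ, ∃ g ∈ D, ∀ᶠ n in atTop, f n ≤ g n }.Nonempty :=
  ⟨_, Set.univ, rfl, fun f => ⟨f, Set.mem_univ f, Filter.Eventually.of_forall fun _ => le_rfl⟩⟩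

lemma fd_mem : ∃ D : Set (ℕ → ℕ), Cardinal.mk D = fd ∧
    ∀ f : ℕ → ℕ, ∃ g ∈ D, ∀ᶠ n in atTop, f n ≤ g n :=
  csInf_mem fd_set_nonempty

lemma bU_le_fd (U : Ultrafilter ℕ) (hU : (↑U : Filter ℕ) ≤ Filter.cofinite) : bU U ≤ fd := by
  refine le_csInf fd_set_nonempty ?_
  rintro cd ⟨D, hmk, hdom⟩
  set A : Set (Set ℕ) := env '' D with hA
  have hAinf : ∀ a ∈ A, a.Infinite := by rintro a ⟨g, _, rfl⟩; exact env_infinite g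
  have hunb : ¬ ∃ b : Set ℕ, b.Infinite ∧ ∀ a ∈ A, leU U a b := by
    rintro ⟨b, hb, hbd⟩
    obtain ⟨g, hgD, hev⟩ := hdom (fun n => enum b n + 1)
    have h1 : leU U (env g) b := hbd _ ⟨g, hgD, rfl⟩
    have h2 : ({n : ℕ | enum (env g) n ≤ enum b n} : Set ℕ).Infinite := mem_U_infinite hU h1
    obtain ⟨N, hN⟩ := Filter.eventually_atTop.mp hev
    have h3 : {n : ℕ | enum (env g) n ≤ enum b n} ⊆ Set.Iio N := by
      intro n hn
      simp only [Set.mem_setOf_eq] at hn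
      by_contra hnN
      have := hN n (not_lt.mp hnN)
      have := enum_env_ge g n
      omega
    exact h2 (Set.Finite.subset (Set.finite_Iio N) h3)
  have hmemA : Cardinal.mk A ∈ { c : Cardinal | ∃ A : Set (Set ℕ), (∀ a ∈ A, a.Infinite) ∧
      Cardinal.mk A = c ∧ ¬ ∃ b : Set ℕ, b.Infinite ∧ ∀ a ∈ A, leU U a b } :=
    ⟨A, hAinf, rfl, hunb⟩
  calc bU U ≤ Cardinal.mk A := csInf_le' hmemA
  _ ≤ Cardinal.mk D := Cardinal.mk_image_le
  _ = cd := hmk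

lemma exists_small_base (U : Ultrafilter ℕ) (hU : (↑U : Filter ℕ) ≤ Filter.cofinite) :
    ∃ V₀ : Ultrafilter ℕ, (↑V₀ : Filter ℕ) ≤ Filter.cofinite ∧
      ∃ B₀ : Set (Set ℕ), Cardinal.mk B₀ = fu ∧ (∀ b ∈ B₀, b ∈ V₀) ∧
        ∀ u ∈ V₀, ∃ b ∈ B₀, b ⊆ u := by
  have h1 : { c : Cardinal | ∃ V : Ultrafilter ℕ,
      (↑V : Filter ℕ) ≤ Filter.cofinite ∧ ultraBaseCard V = c }.Nonempty :=
    ⟨ultraBaseCard U, U, hU, rfl⟩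
  obtain ⟨V₀, hV₀, hVc⟩ := csInf_mem h1
  have h2 : { c : Cardinal | ∃ B : Set (Set ℕ), Cardinal.mk B = c ∧
      (∀ b ∈ B, b ∈ V₀) ∧ ∀ u ∈ V₀, ∃ b ∈ B, b ⊆ u }.Nonempty :=
    ⟨Cardinal.mk {s : Set ℕ | s ∈ V₀}, {s : Set ℕ | s ∈ V₀}, rfl, fun b hb => hb,
      fun u hu => ⟨u, hu, subset_rfl⟩⟩
  obtain ⟨B₀, hmk, hB1, hB2⟩ := csInf_mem h2
  exact ⟨V₀, hV₀, B₀, by rw [hmk]; exact hVc, hB1, hB2⟩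

/-! ### interval collapse machinery -/

/-- index of the block `[T k, T (k+1))` containing `m`. -/
def coll (T : ℕ → ℕ) (m : ℕ) : ℕ := Nat.findGreatest (fun k => T k ≤ m) m

lemma self_le_strictMono {T : ℕ → ℕ} (hT : StrictMono T) (k : ℕ) : k ≤ T k := hT.le_apply

lemma coll_spec {T : ℕ → ℕ} (hT : StrictMono T) (hT0 : T 0 = 0) (m : ℕ) :
    T (coll T m) ≤ m ∧ m < T (coll T m + 1) := by
  classical
  constructor
  · exact Nat.findGreatest_spec (P := fun k => T k ≤ m) (Nat.zero_le m) (show T 0 ≤ m by rw [hT0]; exact Nat.zero_le m)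
  · by_contra hc
    push_neg at hc
    have h1 : coll T m + 1 ≤ m := le_trans (self_le_strictMono hT _) hc
    have h2 := Nat.le_findGreatest (P := fun k => T k ≤ m) (n := m) h1 hc
    simp only [coll] at h2
    omega

lemma coll_eq {T : ℕ → ℕ} (hT : StrictMono T) (hT0 : T 0 = 0) {m k : ℕ}
    (h1 : T k ≤ m) (h2 : m < T (k + 1)) : coll T m = k := by
  obtain ⟨hs1, hs2⟩ := coll_spec hT hT0 m
  by_contra hne
  rcases Nat.lt_or_ge (coll T m) k with hlt | hge
  · have : coll T m + 1 ≤ k := hlt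
    exact absurd (le_trans (hT.monotone this) h1) (not_le.mpr hs2)
  · have hgt : k < coll T m := lt_of_le_of_ne hge (fun h => hne h.symm)
    have : k + 1 ≤ coll T m := hgt
    exact absurd (le_trans (hT.monotone this) hs1) (not_le.mpr h2)

/-- Near-coherence: under `fu < bU U`, there is an interval partition and a small
family `ℬ` of infinite index sets such that every `U`-set meets every block with
index in some member of `ℬ`. -/
lemma NC (U : Ultrafilter ℕ) (hU : (↑U : Filter ℕ) ≤ Filter.cofinite) (hfu : fu < bU U) :
    ∃ T : ℕ → ℕ, StrictMono T ∧ T 0 = 0 ∧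
      ∃ ℬ : Set (Set ℕ), Cardinal.mk ℬ ≤ fu ∧ (∀ w ∈ ℬ, w.Infinite) ∧
        ∀ M ∈ U, ∃ w ∈ ℬ, ∀ k ∈ w, ∃ n ∈ M, T k ≤ n ∧ n < T (k + 1) := by
  classical
  obtain ⟨V₀, hV₀, B₀, hmkB₀, hB₀mem, hB₀base⟩ := exists_small_base U hU
  have hB₀inf : ∀ X ∈ B₀, X.Infinite := fun X hX => mem_U_infinite hV₀ (hB₀mem X hX)
  -- bound the base by one function mod U
  obtain ⟨h, hhinf, hbd⟩ : ∃ b : Set ℕ, b.Infinite ∧ ∀ a ∈ B₀, leU U a b :=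
    bounded_of_lt_bU hB₀inf (by rw [hmkB₀]; exact hfu)
  set H : ℕ → ℕ := enum h with hH
  have HS : StrictMono H := enum_strictMono hhinf
  have Hge : ∀ n, n ≤ H n := fun n => le_enum hhinf n
  -- the fine interval partition
  set t : ℕ → ℕ := fun k => Nat.rec 0 (fun _ ih => H ih + 1) k with ht
  have t0 : t 0 = 0 := rfl
  have tsucc : ∀ k, t (k + 1) = H (t k) + 1 := fun k => rfl
  have tS : StrictMono t := by
    apply strictMono_nat_of_lt_succ
    intro k
    have := Hge (t k)
    rw [tsucc]
    omega
  -- parity choice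
  obtain ⟨o, ho1, hpar⟩ : ∃ o, (o = 0 ∨ o = 1) ∧ {n : ℕ | coll t n % 2 = o} ∈ U := by
    rcases Ultrafilter.mem_or_compl_mem U {n : ℕ | coll t n % 2 = 0} with hc | hc
    · exact ⟨0, Or.inl rfl, hc⟩
    · refine ⟨1, Or.inr rfl, ?_⟩
      have : {n : ℕ | coll t n % 2 = 0}ᶜ = {n : ℕ | coll t n % 2 = 1} := by
        ext n; simp only [Set.mem_compl_iff, Set.mem_setOf_eq]; omega
      rwa [this] at hc
  -- the coarse (paired) partition
  set T : ℕ → ℕ := fun j => if j = 0 then 0 else t (2 * j - o) with hT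
  have T0 : T 0 = 0 := rfl
  have TS : StrictMono T := by
    apply strictMono_nat_of_lt_succ
    intro j
    rcases Nat.eq_zero_or_pos j with rfl | hj
    · show T 0 < T (0 + 1)
      have e01 : (0 : ℕ) + 1 = 1 := rfl
      rw [e01]
      rcases ho1 with rfl | rfl
      · have h2 := self_le_strictMono tS 2
        have e1 : T 1 = t 2 := by norm_num [hT]
        have e0 : T 0 = 0 := rfl
        omega
      · have h2 := self_le_strictMono tS 1
        have e1 : T 1 = t 1 := by norm_num [hT]
        have e0 : T 0 = 0 := rfl
        omega
    · have : 2 * j - o < 2 * (j + 1) - o := by omega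
      simp only [hT, if_neg (by omega : j ≠ 0), if_neg (by omega : j + 1 ≠ 0)]
      exact tS this
  -- block inclusion: fine block k sits inside coarse block (k+o)/2
  have C1 : ∀ k, T ((k + o) / 2) ≤ t k ∧ t (k + 1) ≤ T ((k + o) / 2 + 1) := by
    intro k
    constructor
    · by_cases hj : (k + o) / 2 = 0
      · rw [hj, T0]; exact Nat.zero_le _
      · rw [hT]
        simp only [if_neg hj]
        have harith : 2 * ((k + o) / 2) - o ≤ k := by rcases ho1 with rfl | rfl <;> omega
        exact tS.monotone harith
    · rw [hT]
      simp only [if_neg (by omega : (k + o) / 2 + 1 ≠ 0)]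
      have harith : k + 1 ≤ 2 * ((k + o) / 2 + 1) - o := by rcases ho1 with rfl | rfl <;> omega
      exact tS.monotone harith
  set ℬ : Set (Set ℕ) :=
    (fun X : Set ℕ => {j : ℕ | ∃ x ∈ X, T j ≤ x ∧ x < T (j + 1)}) '' B₀ with hℬ
  have hwX : ∀ X ∈ B₀, ∀ x ∈ X, coll T x ∈ {j : ℕ | ∃ x ∈ X, T j ≤ x ∧ x < T (j + 1)} := by
    intro X _ x hx
    obtain ⟨hs1, hs2⟩ := coll_spec TS T0 x
    exact ⟨x, hx, hs1, hs2⟩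
  refine ⟨T, TS, T0, ℬ, ?_, ?_, ?_⟩
  · rw [← hmkB₀]; exact Cardinal.mk_image_le
  · rintro w ⟨X, hX, rfl⟩
    intro hwfin
    obtain ⟨K, hK⟩ := hwfin.bddAbove
    have hXsub : X ⊆ Set.Iio (T (K + 1)) := by
      intro x hx
      have hmem := hwX X hX x hx
      have hcK : coll T x ≤ K := hK hmem
      obtain ⟨_, hs2⟩ := coll_spec TS T0 x
      exact lt_of_lt_of_le hs2 (TS.monotone (by omega : coll T x + 1 ≤ K + 1))
    exact hB₀inf X hX ((Set.finite_Iio _).subset hXsub)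
  · intro M hM
    set N : Set ℕ := {j : ℕ | ∃ n ∈ M, T j ≤ n ∧ n < T (j + 1)} with hN
    have hC : {m : ℕ | coll T m ∈ N} ∈ V₀ := by
      by_contra hc
      have hcc : {m : ℕ | coll T m ∈ N}ᶜ ∈ V₀ := Ultrafilter.compl_mem_iff_notMem.mpr hc
      obtain ⟨X, hXB, hXsub⟩ := hB₀base _ hcc
      -- pick a point in M ∩ A_X ∩ parity set
      have hAX : {n : ℕ | enum X n ≤ H n} ∈ U := hbd X hXB
      have hall : M ∩ ({n : ℕ | enum X n ≤ H n} ∩ {n : ℕ | coll t n % 2 = o}) ∈ U :=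
        Filter.inter_mem hM (Filter.inter_mem hAX hpar)
      obtain ⟨n, hnM, hnA, hnP⟩ := Filter.nonempty_of_mem hall
      have hnP' : coll t n % 2 = o := hnP
      have hnA' : enum X n ≤ H n := hnA
      obtain ⟨hk1, hk2⟩ := coll_spec tS t0 n
      generalize hkk : coll t n = k at hk1 hk2 hnP'
      have hTj1 : T ((k + o) / 2) ≤ n := le_trans (C1 k).1 hk1
      have hTj2 : n < T ((k + o) / 2 + 1) := lt_of_lt_of_le hk2 (C1 k).2
      have hjN : (k + o) / 2 ∈ N := ⟨n, hnM, hTj1, hTj2⟩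
      have hXinf' := hB₀inf X hXB
      set x := enum X n with hx
      have hxX : x ∈ X := enum_mem hXinf' n
      have hnx : n ≤ x := le_enum hXinf' n
      have hxH : x ≤ H n := hnA'
      have hxlt : x < t (k + 1 + 1) := by
        have h1 : H n ≤ H (t (k + 1)) := HS.monotone (by omega)
        have h2 : t (k + 1 + 1) = H (t (k + 1)) + 1 := tsucc (k + 1)
        omega
      have hxge : t k ≤ x := le_trans hk1 hnx
      have hpair : (k + 1 + o) / 2 = (k + o) / 2 := by
        rcases ho1 with rfl | rfl <;> omega
      have hxJ1 : T ((k + o) / 2) ≤ x ∧ x < T ((k + o) / 2 + 1) := by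
        rcases Nat.lt_or_ge x (t (k + 1)) with hcase | hcase
        · exact ⟨le_trans (C1 k).1 hxge, lt_of_lt_of_le hcase (C1 k).2⟩
        · refine ⟨le_trans ?_ hcase, ?_⟩
          · have h3 := (C1 (k + 1)).1
            rw [hpair] at h3
            exact h3
          · have h3 := (C1 (k + 1)).2
            rw [hpair] at h3
            exact lt_of_lt_of_le hxlt h3
      have hcoll : coll T x = (k + o) / 2 := coll_eq TS T0 hxJ1.1 hxJ1.2
      have hmem := hXsub hxX
      rw [Set.mem_compl_iff] at hmem
      exact hmem (by rw [Set.mem_setOf_eq, hcoll]; exact hjN)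
    obtain ⟨X, hXB, hXsub⟩ := hB₀base _ hC
    refine ⟨_, ⟨X, hXB, rfl⟩, ?_⟩
    rintro j ⟨x, hxX, hx1, hx2⟩
    have hcoll : coll T x = j := coll_eq TS T0 hx1 hx2
    have := hXsub hxX
    rw [Set.mem_setOf_eq, hcoll] at this
    exact this

/-- least element `k` of `w` with `m ≤ T k`. -/
noncomputable def nxt (T : ℕ → ℕ) (w : Set ℕ) (m : ℕ) : ℕ := sInf {k | k ∈ w ∧ m ≤ T k}

lemma nxt_spec {T : ℕ → ℕ} (hT : StrictMono T) {w : Set ℕ} (hw : w.Infinite) (m : ℕ) :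
    nxt T w m ∈ w ∧ m ≤ T (nxt T w m) := by
  have hne : {k | k ∈ w ∧ m ≤ T k}.Nonempty := by
    obtain ⟨k, hkw, hmk⟩ := hw.exists_gt m
    exact ⟨k, hkw, le_trans (le_of_lt hmk) (self_le_strictMono hT k)⟩
  exact csInf_mem hne

lemma fd_le_bU (U : Ultrafilter ℕ) (hU : (↑U : Filter ℕ) ≤ Filter.cofinite)
    (hfu : fu < bU U) : fd ≤ bU U := by
  classical
  obtain ⟨T, TS, T0, ℬ, hℬfu, hℬinf, hℬmain⟩ := NC U hU hfu
  obtain ⟨A, hAinf, hAmk, hAunb⟩ := bU_mem U hU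
  set φ : Set ℕ × Set ℕ → (ℕ → ℕ) :=
    fun p => fun m => enum p.1 (T (nxt T p.2 m + 1)) with hφ
  set D : Set (ℕ → ℕ) := φ '' (A ×ˢ ℬ) with hD
  have hdom : ∀ f : ℕ → ℕ, ∃ g ∈ D, ∀ᶠ n in atTop, f n ≤ g n := by
    intro g₀
    set c := env g₀ with hc
    have hcinf : c.Infinite := env_infinite g₀
    have hnotbd : ∃ a ∈ A, ¬ leU U a c := by
      by_contra hall
      push_neg at hall
      exact hAunb ⟨c, hcinf, hall⟩
    obtain ⟨a, haA, hna⟩ := hnotbd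
    have hainf : a.Infinite := hAinf a haA
    have hM : {n : ℕ | enum c n < enum a n} ∈ U := by
      have := Ultrafilter.compl_mem_iff_notMem.mpr hna
      have heq : {n : ℕ | enum a n ≤ enum c n}ᶜ = {n : ℕ | enum c n < enum a n} := by
        ext n; simp only [Set.mem_compl_iff, Set.mem_setOf_eq, not_le]
      rwa [heq] at this
    obtain ⟨w, hwℬ, hw⟩ := hℬmain _ hM
    have hwinf : w.Infinite := hℬinf w hwℬ
    refine ⟨φ (a, w), ⟨(a, w), Set.mk_mem_prod haA hwℬ, rfl⟩, ?_⟩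
    refine Filter.Eventually.of_forall ?_
    intro m
    obtain ⟨hk1, hk2⟩ := nxt_spec TS hwinf m
    set k := nxt T w m with hkdef
    obtain ⟨n, hnM, hn1, hn2⟩ := hw k hk1
    have step1 : g₀ m ≤ enum c m := enum_env_ge g₀ m
    have step2 : enum c m ≤ enum c n := (enum_mono hcinf) (le_trans hk2 hn1)
    have step3 : enum c n < enum a n := hnM
    have step4 : enum a n ≤ enum a (T (k + 1)) := (enum_mono hainf) (le_of_lt hn2)
    show g₀ m ≤ enum a (T (k + 1))
    omega
  have h1 : Cardinal.mk D ≤ Cardinal.mk ↑(A ×ˢ ℬ) := Cardinal.mk_image_le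
  have h2 : Cardinal.mk ↑(A ×ˢ ℬ) = Cardinal.mk ↑A * Cardinal.mk ↑ℬ := by
    rw [Cardinal.mk_congr (Equiv.Set.prod A ℬ), Cardinal.mk_prod,
      Cardinal.lift_id, Cardinal.lift_id]
  have h3 : Cardinal.mk ↑A * Cardinal.mk ↑ℬ ≤ bU U * bU U := by
    apply mul_le_mul'
    · rw [hAmk]
    · exact le_trans hℬfu (le_of_lt hfu)
  have h4 : bU U * bU U = bU U := Cardinal.mul_eq_self (aleph0_le_bU U hU)
  have hmem : Cardinal.mk D ∈ { c : Cardinal | ∃ D : Set (ℕ → ℕ), Cardinal.mk D = c ∧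
      ∀ f : ℕ → ℕ, ∃ g ∈ D, ∀ᶠ n in atTop, f n ≤ g n } := ⟨D, rfl, hdom⟩
  calc fd ≤ Cardinal.mk D := csInf_le' hmem
  _ ≤ bU U := by rw [h2] at h1; exact le_trans h1 (le_trans h3 (le_of_eq h4))

/-- union of fewer than `bU U` many sets, each of size `< bU U`, has size `< bU U`. -/
lemma bU_small_union {U : Ultrafilter ℕ} (hU : (↑U : Filter ℕ) ≤ Filter.cofinite)
    {ℬ : Set (Set ℕ)} (hℬ : Cardinal.mk ↑ℬ < bU U)
    (Tf : ↑ℬ → Set (Set ℕ)) (hTsz : ∀ w, Cardinal.mk ↑(Tf w) < bU U)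
    (hTinf : ∀ w, ∀ x ∈ Tf w, x.Infinite)
    {S : Set (Set ℕ)} (hS : ∀ s ∈ S, ∃ w : ↑ℬ, s ∈ Tf w) :
    Cardinal.mk ↑S < bU U := by
  classical
  by_contra hcon
  push_neg at hcon
  obtain ⟨A, hAinf, hAmk, hAunb⟩ := bU_mem U hU
  have hAS : Cardinal.mk ↑A ≤ Cardinal.mk ↑S := by rw [hAmk]; exact hcon
  obtain ⟨e⟩ := Cardinal.le_def _ _ |>.mp hAS
  -- choose a piece for each element of A
  have hchoice : ∀ a : ↑A, ∃ w : ↑ℬ, (e a : Set ℕ) ∈ Tf w := fun a => hS _ (e a).2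
  choose wf hwf using hchoice
  -- the slices of A
  set Aset : ↑ℬ → Set (Set ℕ) := fun w₀ => {a | ∃ h : a ∈ A, wf ⟨a, h⟩ = w₀} with hAset
  have hAsetsub : ∀ w₀, Aset w₀ ⊆ A := by rintro w₀ a ⟨h, _⟩; exact h
  have hAsetsz : ∀ w₀, Cardinal.mk ↑(Aset w₀) < bU U := by
    intro w₀
    refine lt_of_le_of_lt ?_ (hTsz w₀)
    rw [Cardinal.le_def]
    refine ⟨⟨fun a => ⟨(e ⟨a.1, a.2.choose⟩ : Set ℕ), ?_⟩, ?_⟩⟩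
    · have h1 := hwf ⟨a.1, a.2.choose⟩
      rw [a.2.choose_spec] at h1
      exact h1
    · intro a₁ a₂ hfeq
      apply Subtype.coe_injective
      have h1 := congrArg (fun z : ↑(Tf w₀) => (z : Set ℕ)) hfeq
      dsimp at h1
      have h2 : e ⟨a₁.1, a₁.2.choose⟩ = e ⟨a₂.1, a₂.2.choose⟩ := Subtype.coe_injective h1
      exact congrArg (fun z : ↑A => (z : Set ℕ)) (e.injective h2)
  -- bound each slice
  have hbd : ∀ w₀ : ↑ℬ, ∃ b : Set ℕ, b.Infinite ∧ ∀ a ∈ Aset w₀, leU U a b := fun w₀ =>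
    bounded_of_lt_bU (fun a ha => hAinf a (hAsetsub w₀ ha)) (hAsetsz w₀)
  choose cb hcbinf hcb using hbd
  -- bound the family of bounds
  have hrange : Cardinal.mk ↑(Set.range cb) < bU U := lt_of_le_of_lt Cardinal.mk_range_le hℬ
  obtain ⟨e₀, he₀inf, he₀⟩ :=
    bounded_of_lt_bU (fun b hb => by obtain ⟨w₀, rfl⟩ := hb; exact hcbinf w₀) hrange
  -- contradiction: e₀ bounds all of A
  apply hAunb
  refine ⟨e₀, he₀inf, fun a ha => ?_⟩
  have h1 : a ∈ Aset (wf ⟨a, ha⟩) := ⟨ha, rfl⟩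
  exact leU_trans (hcb _ a h1) (he₀ _ ⟨wf ⟨a, ha⟩, rfl⟩)

/-- Assume NCF, in the form: every non-principal ultrafilter `V` on `ω` satisfies
`𝔲 < 𝔟(V)`. Then for any non-principal ultrafilter `U`, every `𝔡`-unbounded set
`X ⊆ [ω]^ω` is a `U`-scale. -/
theorem stmt7 (hNCF : ∀ V : Ultrafilter ℕ, (↑V : Filter ℕ) ≤ Filter.cofinite → fu < bU V)
    (U : Ultrafilter ℕ) (hU : (↑U : Filter ℕ) ≤ Filter.cofinite)
    (X : Set (Set ℕ)) (hXinf : ∀ x ∈ X, x.Infinite) (hX : DUnbounded X) :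
    IsUScale U X := by
  classical
  have hfu : fu < bU U := hNCF U hU
  have h1 : bU U ≤ fd := bU_le_fd U hU
  have h2 : fd ≤ bU U := fd_le_bU U hU hfu
  have hbUfd : bU U = fd := le_antisymm h1 h2
  obtain ⟨T, TS, T0, ℬ, hℬfu, hℬinf, hℬmain⟩ := NC U hU hfu
  refine ⟨hXinf, hbUfd ▸ hX.1, ?_⟩
  intro g hg
  set S : Set (Set ℕ) := {x | x ∈ X ∧ ¬ leU U g x} with hS
  have hSsub : S ⊆ X := fun x hx => hx.1
  refine ⟨g, hg, S, hSsub, ?_, leU_refl U g, ?_⟩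
  · -- `S` is small
    set Tf : ↑ℬ → Set (Set ℕ) := fun w =>
      {x | x ∈ X ∧ ∀ n, enum x n ≤ enum (env (fun m => enum g (T (nxt T w.1 m + 1)))) n}
      with hTf
    have hTsz : ∀ w, Cardinal.mk ↑(Tf w) < bU U := by
      intro w
      rw [hbUfd]
      exact hX.2 _ (env_infinite _)
    have hTinf : ∀ w, ∀ x ∈ Tf w, x.Infinite := fun w x hx => hXinf x hx.1
    have hcov : ∀ s ∈ S, ∃ w : ↑ℬ, s ∈ Tf w := by
      intro x hx
      obtain ⟨hxX, hxn⟩ := hx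
      have hxinf := hXinf x hxX
      have hM : {n : ℕ | enum x n < enum g n} ∈ U := by
        have hc := Ultrafilter.compl_mem_iff_notMem.mpr hxn
        have heq : {n : ℕ | enum g n ≤ enum x n}ᶜ = {n : ℕ | enum x n < enum g n} := by
          ext n; simp only [Set.mem_compl_iff, Set.mem_setOf_eq, not_le]
        rwa [heq] at hc
      obtain ⟨w, hwℬ, hw⟩ := hℬmain _ hM
      have hwinf : w.Infinite := hℬinf w hwℬ
      refine ⟨⟨w, hwℬ⟩, hxX, ?_⟩
      intro m
      refine le_trans ?_ (enum_env_ge _ m)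
      show enum x m ≤ enum g (T (nxt T w m + 1))
      obtain ⟨hk1, hk2⟩ := nxt_spec TS hwinf m
      obtain ⟨n, hnM, hn1, hn2⟩ := hw _ hk1
      have s1 : enum x m ≤ enum x n := (enum_mono hxinf) (le_trans hk2 hn1)
      have s2 : enum x n < enum g n := hnM
      have s3 : enum g n ≤ enum g (T (nxt T w m + 1)) := (enum_mono hg) (le_of_lt hn2)
      omega
    exact bU_small_union hU (lt_of_le_of_lt hℬfu hfu) Tf hTsz hTinf hcov
  · rintro x ⟨hxX, hxS⟩
    by_contra hc
    exact hxS ⟨hxX, hc⟩
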